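/- Define φ₀ and φ₁ from partizan games to scoring games by: φ₀(G) = n if G is equivalent to an integer n, else {φ₁(G^L)|φ₁(G^R)}; φ₁(G) = {n-1|n+1} if G is equivalent to an integer n, else {φ₀(G^L)|φ₀(G^R)}. Then for any partizan game G and i ∈ {0,1}, φᵢ(G) is a well-tempered scoring game with π(φᵢ(G)) = i, φᵢ(G) ∈ J, and ψ(φᵢ(G)) = G (equality of partizan game values). -/

import Mathlib

/-!
Write `LS, RS` for the Left and Right outcomes of `φ₀ G` and `ls, rs` for those of `φ₁ G`.
By induction on `G`: `ls ≤ LS ≤ ls + 1`, `RS ≤ rs ≤ RS + 1`, `RS ≤ G ≤ LS` and `ls ⧏ G ⧏ rs`.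
At a non-integer `G` these bounds, applied to the options, show that `G` has options on both
sides and that `RS ≤ LS` and `rs ≤ ls + 2`: otherwise they would leave room for an integer `n`
with `Gᴸ ⧏ n ⧏ Gᴿ` and the simplicity rule would give `G = n`. So `φᵢ G` is well tempered of
parity `i`, and each of its subgames (a root of some `φⱼ g`, or an integer) has `R - L ≤ 0` if even
and `R - L ≤ 2` if odd, with equality `R = L` at its integer leaves. Finally `ψ (φᵢ G) = G` option
by option, and `{n - 1 | n + 1} = n` at integer positions.
-/

/-- Well-tempered scoring game trees: an integer (final score) or a position
with lists of Left and Right options. -/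
inductive WT : Type where
  | int : ℤ → WT
  | node : List WT → List WT → WT

namespace WT

/-- Left options. -/
def lopts : WT → List WT
  | int _ => []
  | node L _ => L

/-- Right options. -/
def ropts : WT → List WT
  | int _ => []
  | node _ R => R

theorem sizeOf_lt_of_mem_lopts : ∀ {G g : WT}, g ∈ G.lopts → sizeOf g < sizeOf G := by
  intro G g h
  cases G with
  | int n => simp [lopts] at h
  | node L R =>
    simp only [lopts] at h
    have h1 := List.sizeOf_lt_of_mem h
    have h2 : sizeOf (WT.node L R) = 1 + sizeOf L + sizeOf R := by simp
    omega

theorem sizeOf_lt_of_mem_ropts : ∀ {G g : WT}, g ∈ G.ropts → sizeOf g < sizeOf G := by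
  intro G g h
  cases G with
  | int n => simp [ropts] at h
  | node L R =>
    simp only [ropts] at h
    have h1 := List.sizeOf_lt_of_mem h
    have h2 : sizeOf (WT.node L R) = 1 + sizeOf L + sizeOf R := by simp
    omega

/-- Disjunctive sum of two games. -/
def add (G H : WT) : WT :=
  match G, H with
  | int m, int n => int (m + n)
  | G, H =>
    node ((G.lopts.attach.map fun g => add g.1 H) ++ (H.lopts.attach.map fun h => add G h.1))
         ((G.ropts.attach.map fun g => add g.1 H) ++ (H.ropts.attach.map fun h => add G h.1))
termination_by sizeOf G + sizeOf H
decreasing_by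
  all_goals
    first
      | (have := sizeOf_lt_of_mem_lopts g.2; omega)
      | (have := sizeOf_lt_of_mem_lopts h.2; omega)
      | (have := sizeOf_lt_of_mem_ropts g.2; omega)
      | (have := sizeOf_lt_of_mem_ropts h.2; omega)

/-- Negation of a game: swap players and negate scores. -/
def neg : WT → WT
  | int n => int (-n)
  | node L R =>
    node ((WT.node L R).ropts.attach.map fun g => neg g.1)
         ((WT.node L R).lopts.attach.map fun g => neg g.1)
termination_by G => sizeOf G
decreasing_by
  all_goals
    first
      | exact sizeOf_lt_of_mem_lopts g.2
      | exact sizeOf_lt_of_mem_ropts g.2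

def lmax : List ℤ → ℤ
  | [] => 0
  | x :: xs => xs.foldl max x

def lmin : List ℤ → ℤ
  | [] => 0
  | x :: xs => xs.foldl min x

/-- The pair (left outcome, right outcome). -/
def out : WT → ℤ × ℤ
  | int n => (n, n)
  | node L R =>
    (lmax ((WT.node L R).lopts.attach.map fun g => (out g.1).2),
     lmin ((WT.node L R).ropts.attach.map fun g => (out g.1).1))
termination_by G => sizeOf G
decreasing_by
  all_goals
    first
      | exact sizeOf_lt_of_mem_lopts g.2
      | exact sizeOf_lt_of_mem_ropts g.2

/-- Left outcome L(G): optimal score when Left moves first. -/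
def Lout (G : WT) : ℤ := G.out.1

/-- Right outcome R(G): optimal score when Right moves first. -/
def Rout (G : WT) : ℤ := G.out.2

/-- `IsWT G p` : `G` is a well-tempered game of parity `p`
(`false` = even-tempered, `true` = odd-tempered). -/
inductive IsWT : WT → Bool → Prop where
  | int (n : ℤ) : IsWT (WT.int n) false
  | node {L R : List WT} {p : Bool} (hL : L ≠ []) (hR : R ≠ [])
      (hLp : ∀ g ∈ L, IsWT g p) (hRp : ∀ g ∈ R, IsWT g p) :
      IsWT (WT.node L R) (!p)

/-- `G` is a well-tempered game (of some parity). -/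
def Wt (G : WT) : Prop := ∃ p, IsWT G p

/-- Parity, computed structurally (`false` = even-tempered, `true` = odd-tempered;
agrees with `IsWT` on well-tempered games). -/
def par : WT → Bool
  | int _ => false
  | node [] _ => true
  | node (g :: _) _ => !(par g)

/-- Final score under optimal play when Left moves last. -/
def Lf (G : WT) : ℤ := if G.par then G.Lout else G.Rout

/-- Final score under optimal play when Right moves last. -/
def Rf (G : WT) : ℤ := if G.par then G.Rout else G.Lout

/-- `G ≲ H` : for every well-tempered `X`, `L(G+X) ≤ L(H+X)` and `R(G+X) ≤ R(H+X)`. -/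
def Le (G H : WT) : Prop :=
  ∀ X : WT, X.Wt → (G.add X).Lout ≤ (H.add X).Lout ∧ (G.add X).Rout ≤ (H.add X).Rout

/-- `G ≳ H`. -/
def Ge (G H : WT) : Prop := Le H G

/-- `G ≈ H` : equivalence of scoring games. -/
def Equiv (G H : WT) : Prop :=
  ∀ X : WT, X.Wt → (G.add X).Lout = (H.add X).Lout ∧ (G.add X).Rout = (H.add X).Rout

/-- `G` and `H` are well-tempered with the same parity. -/
def SamePar (G H : WT) : Prop := ∃ p, IsWT G p ∧ IsWT H p

/-- `G` takes values in `S`: every integer subgame lies in `S`. -/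
inductive Valued (S : Set ℤ) : WT → Prop where
  | int {n : ℤ} : n ∈ S → Valued S (WT.int n)
  | node {L R : List WT} : (∀ g ∈ L, Valued S g) → (∀ g ∈ R, Valued S g) →
      Valued S (WT.node L R)

/-- `Subgame H G` : `H` is a subgame of `G`. -/
inductive Subgame : WT → WT → Prop where
  | refl (G : WT) : Subgame G G
  | left {H G' : WT} {L R : List WT} : G' ∈ L → Subgame H G' → Subgame H (WT.node L R)
  | right {H G' : WT} {L R : List WT} : G' ∈ R → Subgame H G' → Subgame H (WT.node L R)

/-- `gap G p` : supremum of `R(H) - L(H)` over subgames `H` of `G` of parity `p`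
(as an element of `WithBot ℤ`; the supremum of the empty set is `⊥ = -∞`). -/
noncomputable def gap (G : WT) (p : Bool) : WithBot ℤ :=
  sSup {x : WithBot ℤ | ∃ H : WT, Subgame H G ∧ IsWT H p ∧ x = ((H.Rout - H.Lout : ℤ) : WithBot ℤ)}

/-- Heating by `t`. -/
def heat (t : ℤ) : WT → WT
  | int n => int n
  | node L R =>
    node ((WT.node L R).lopts.attach.map fun g => (WT.int t).add (heat t g.1))
         ((WT.node L R).ropts.attach.map fun g => (WT.int (-t)).add (heat t g.1))
termination_by G => sizeOf G
decreasing_by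
  all_goals
    first
      | exact sizeOf_lt_of_mem_lopts g.2
      | exact sizeOf_lt_of_mem_ropts g.2

end WT

namespace SetTheory

/-- Pre-games (as in the older Mathlib's `SetTheory.PGame`, which is no longer in Mathlib). -/
inductive PGame : Type (u + 1)
  | mk : ∀ α β : Type u, (α → PGame) → (β → PGame) → PGame

namespace PGame

/-- The pair `(x ≤ y, y ≤ x)` for the usual order on pre-games:
`x ≤ y ↔ (∀ i, ¬ y ≤ xᴸᵢ) ∧ (∀ j, ¬ yᴿⱼ ≤ x)`. -/
def leAux : PGame.{u} → PGame.{u} → Prop × Prop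
  | mk xl xr xL xR => leAuxRight xl xr xL xR (fun i => leAux (xL i)) (fun i => leAux (xR i))
where
  /-- `leAuxRight xl xr xL xR fL fR y` is `leAux (mk xl xr xL xR) y`, given `fL i = leAux (xL i)`
  and `fR i = leAux (xR i)`. -/
  leAuxRight (xl xr : Type u) (xL : xl → PGame.{u}) (xR : xr → PGame.{u})
      (fL : xl → PGame.{u} → Prop × Prop) (fR : xr → PGame.{u} → Prop × Prop) :
      PGame.{u} → Prop × Prop
    | mk yl yr yL yR =>
      ((∀ i, ¬ (fL i (mk yl yr yL yR)).2) ∧ (∀ j, ¬ (leAuxRight xl xr xL xR fL fR (yR j)).2),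
       (∀ j, ¬ (leAuxRight xl xr xL xR fL fR (yL j)).1) ∧ (∀ i, ¬ (fR i (mk yl yr yL yR)).1))

instance : LE PGame.{u} := ⟨fun x y => (leAux x y).1⟩

/-- Equivalence of pre-games: `x ≤ y ∧ y ≤ x`. -/
def Equiv (x y : PGame.{u}) : Prop := x ≤ y ∧ y ≤ x

instance : Zero PGame.{u} := ⟨mk PEmpty PEmpty PEmpty.elim PEmpty.elim⟩

instance : One PGame.{u} := ⟨mk PUnit PEmpty (fun _ => 0) PEmpty.elim⟩

/-- Negation of pre-games. -/
def neg : PGame.{u} → PGame.{u}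
  | mk l r L R => mk r l (fun i => neg (R i)) (fun i => neg (L i))

instance : Neg PGame.{u} := ⟨neg⟩

/-- Sum of pre-games (as in the older Mathlib). -/
def add : PGame.{u} → PGame.{u} → PGame.{u}
  | mk xl xr xL xR => addRight xl xr xL xR (fun i => add (xL i)) (fun i => add (xR i))
where
  /-- `addRight xl xr xL xR fL fR y` is `mk xl xr xL xR + y`, given `fL i = xL i + ·`
  and `fR i = xR i + ·`. -/
  addRight (xl xr : Type u) (xL : xl → PGame.{u}) (xR : xr → PGame.{u})
      (fL : xl → PGame.{u} → PGame.{u}) (fR : xr → PGame.{u} → PGame.{u}) :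
      PGame.{u} → PGame.{u}
    | mk yl yr yL yR =>
      mk (xl ⊕ yl) (xr ⊕ yr)
        (Sum.elim (fun i => fL i (mk yl yr yL yR)) (fun j => addRight xl xr xL xR fL fR (yL j)))
        (Sum.elim (fun i => fR i (mk yl yr yL yR)) (fun j => addRight xl xr xL xR fL fR (yR j)))

instance : Add PGame.{u} := ⟨add⟩

end PGame

end SetTheory

open SetTheory

/-- The partizan game equal to the natural number `n` (in canonical integer form). -/
def natPGame : ℕ → PGame
  | 0 => 0
  | n + 1 => natPGame n + 1

/-- The partizan game equal to the integer `n`. -/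
def intPGame (n : ℤ) : PGame :=
  if 0 ≤ n then natPGame n.toNat else -natPGame (-n).toNat

/-- The map ψ from well-tempered scoring games to normal-play partizan games:
ψ(n) = n for integers and ψ({Gᴸ|Gᴿ}) = {ψ(Gᴸ)|ψ(Gᴿ)}. -/
def psi : WT → PGame
  | WT.int n => intPGame n
  | WT.node L R =>
      PGame.mk {g // g ∈ (WT.node L R).lopts} {g // g ∈ (WT.node L R).ropts}
        (fun g => psi g.1) (fun g => psi g.1)
termination_by G => sizeOf G
decreasing_by
  all_goals
    first
      | exact WT.sizeOf_lt_of_mem_lopts g.2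
      | exact WT.sizeOf_lt_of_mem_ropts g.2

/-- Short partizan game trees: finitely many options at each stage. -/
inductive SPG : Type where
  | node : List SPG → List SPG → SPG

namespace SPG

def lopts : SPG → List SPG
  | node L _ => L

def ropts : SPG → List SPG
  | node _ R => R

theorem sizeOf_lt_of_mem_lopts : ∀ {G g : SPG}, g ∈ G.lopts → sizeOf g < sizeOf G := by
  intro G g h
  cases G with
  | node L R =>
    simp only [lopts] at h
    have h1 := List.sizeOf_lt_of_mem h
    have h2 : sizeOf (SPG.node L R) = 1 + sizeOf L + sizeOf R := by simp
    omega

theorem sizeOf_lt_of_mem_ropts : ∀ {G g : SPG}, g ∈ G.ropts → sizeOf g < sizeOf G := by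
  intro G g h
  cases G with
  | node L R =>
    simp only [ropts] at h
    have h1 := List.sizeOf_lt_of_mem h
    have h2 : sizeOf (SPG.node L R) = 1 + sizeOf L + sizeOf R := by simp
    omega

/-- The partizan game (tree) corresponding to a short partizan game tree. -/
def toPGame : SPG → PGame
  | node L R =>
      PGame.mk {g // g ∈ (SPG.node L R).lopts} {g // g ∈ (SPG.node L R).ropts}
        (fun g => toPGame g.1) (fun g => toPGame g.1)
termination_by G => sizeOf G
decreasing_by
  all_goals
    first
      | exact sizeOf_lt_of_mem_lopts g.2
      | exact sizeOf_lt_of_mem_ropts g.2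

end SPG

/- The maps φ₀ (`i = false`) and φ₁ (`i = true`) from partizan games to well-tempered
scoring games: φ₀(G) = n if G is equivalent to an integer n, else {φ₁(Gᴸ)|φ₁(Gᴿ)};
φ₁(G) = {n-1|n+1} if G is equivalent to an integer n, else {φ₀(Gᴸ)|φ₀(Gᴿ)}. -/
open Classical in
noncomputable def phi (i : Bool) (G : SPG) : WT :=
  if h : ∃ n : ℤ, PGame.Equiv G.toPGame (intPGame n) then
    if i then WT.node [WT.int (h.choose - 1)] [WT.int (h.choose + 1)]
    else WT.int h.choose
  else
    WT.node (G.lopts.attach.map fun g => phi (!i) g.1)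
            (G.ropts.attach.map fun g => phi (!i) g.1)
termination_by sizeOf G
decreasing_by
  all_goals
    first
      | exact SPG.sizeOf_lt_of_mem_lopts g.2
      | exact SPG.sizeOf_lt_of_mem_ropts g.2

namespace SetTheory.PGame

def LeftMoves : PGame.{u} → Type u
  | mk l _ _ _ => l

def RightMoves : PGame.{u} → Type u
  | mk _ r _ _ => r

def moveLeft : (x : PGame.{u}) → x.LeftMoves → PGame.{u}
  | mk _ _ L _ => L

def moveRight : (x : PGame.{u}) → x.RightMoves → PGame.{u}
  | mk _ _ _ R => R

theorem moveLeft_mk {xl xr : Type u} {xL : xl → PGame.{u}} {xR : xr → PGame.{u}} :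
    (mk xl xr xL xR).moveLeft = xL := rfl

def LF (x y : PGame.{u}) : Prop := ¬ y ≤ x

infixl:50 " ⧏ " => PGame.LF

theorem leAux_mk_mk {xl xr yl yr : Type u} {xL : xl → PGame.{u}} {xR : xr → PGame.{u}}
    {yL : yl → PGame.{u}} {yR : yr → PGame.{u}} :
    leAux (mk xl xr xL xR) (mk yl yr yL yR) =
      ((∀ i, ¬ (leAux (xL i) (mk yl yr yL yR)).2) ∧ (∀ j, ¬ (leAux (mk xl xr xL xR) (yR j)).2),
       (∀ j, ¬ (leAux (mk xl xr xL xR) (yL j)).1) ∧ (∀ i, ¬ (leAux (xR i) (mk yl yr yL yR)).1)) :=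
  rfl

-- `leAux x y` is meant to be `(x ≤ y, y ≤ x)`; this justifies its second component.
theorem leAux_swap (x : PGame.{u}) : ∀ y : PGame.{u},
    ((leAux x y).2 ↔ (leAux y x).1) ∧ ((leAux y x).2 ↔ (leAux x y).1) := by
  induction x with
  | mk xl xr xL xR ihL ihR =>
    intro y
    induction y with
    | mk yl yr yL yR jhL jhR =>
      have h1 : ∀ j, (leAux (yL j) (mk xl xr xL xR)).2 ↔ (leAux (mk xl xr xL xR) (yL j)).1 :=
        fun j => (jhL j).2
      have h2 : ∀ i, (leAux (mk yl yr yL yR) (xR i)).2 ↔ (leAux (xR i) (mk yl yr yL yR)).1 :=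
        fun i => (ihR i _).2
      have h3 : ∀ i, (leAux (mk yl yr yL yR) (xL i)).1 ↔ (leAux (xL i) (mk yl yr yL yR)).2 :=
        fun i => (ihL i _).1.symm
      have h4 : ∀ j, (leAux (yR j) (mk xl xr xL xR)).1 ↔ (leAux (mk xl xr xL xR) (yR j)).2 :=
        fun j => (jhR j).1.symm
      rw [leAux_mk_mk, leAux_mk_mk]
      simp only [h1, h2, h3, h4, and_self]

theorem le_iff_forall_lf {x y : PGame.{u}} :
    x ≤ y ↔ (∀ i, x.moveLeft i ⧏ y) ∧ ∀ j, x ⧏ y.moveRight j := by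
  obtain ⟨xl, xr, xL, xR⟩ := x
  obtain ⟨yl, yr, yL, yR⟩ := y
  change (leAux (mk xl xr xL xR) (mk yl yr yL yR)).1 ↔ _
  rw [leAux_mk_mk]
  exact and_congr (forall_congr' fun i => not_congr (leAux_swap (xL i) _).1)
    (forall_congr' fun j => not_congr (leAux_swap (mk xl xr xL xR) (yR j)).1)

theorem lf_iff_exists_le {x y : PGame.{u}} :
    x ⧏ y ↔ (∃ i, x ≤ y.moveLeft i) ∨ ∃ j, x.moveRight j ≤ y := by
  change ¬ y ≤ x ↔ _
  rw [le_iff_forall_lf]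
  simp only [LF, not_and_or, not_forall, not_not]

protected theorem le_refl : ∀ x : PGame.{u}, x ≤ x
  | mk _ _ xL xR => le_iff_forall_lf.2
      ⟨fun i => lf_iff_exists_le.2 (.inl ⟨i, PGame.le_refl (xL i)⟩),
       fun j => lf_iff_exists_le.2 (.inr ⟨j, PGame.le_refl (xR j)⟩)⟩

theorem le_trans_of_moves {x y z : PGame.{u}}
    (h₁ : ∀ {i}, y ≤ z → z ≤ x.moveLeft i → y ≤ x.moveLeft i)
    (h₂ : ∀ {j}, z.moveRight j ≤ x → x ≤ y → z.moveRight j ≤ y) (hxy : x ≤ y) (hyz : y ≤ z) :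
    x ≤ z :=
  le_iff_forall_lf.2 ⟨fun i h => (le_iff_forall_lf.1 hxy).1 i (h₁ hyz h),
    fun j h => (le_iff_forall_lf.1 hyz).2 j (h₂ h hxy)⟩

-- Transitivity must be proved for all three rotations of `(x, y, z)` at once.
theorem le_trans_rotations (x : PGame.{u}) : ∀ y z : PGame.{u},
    (x ≤ y → y ≤ z → x ≤ z) ∧ (y ≤ z → z ≤ x → y ≤ x) ∧ (z ≤ x → x ≤ y → z ≤ y) := by
  induction x with
  | mk xl xr xL xR IHxl IHxr =>
    intro y
    induction y with
    | mk yl yr yL yR IHyl IHyr =>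
      intro z
      induction z with
      | mk zl zr zL zR IHzl IHzr =>
        exact ⟨le_trans_of_moves (fun {i} => (IHxl i _ _).2.1) fun {j} => (IHzr j).2.2,
          le_trans_of_moves (fun {i} => (IHyl i _).2.2) fun {j} => (IHxr j _ _).1,
          le_trans_of_moves (fun {i} => (IHzl i).1) fun {j} => (IHyr j _).2.1⟩

instance : Preorder PGame.{u} where
  le_refl := PGame.le_refl
  le_trans x y z := (le_trans_rotations x y z).1

instance : HasEquiv PGame.{u} := ⟨Equiv⟩

theorem Equiv.refl (x : PGame.{u}) : x ≈ x := ⟨le_rfl, le_rfl⟩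

theorem Equiv.le {x y : PGame.{u}} (h : x ≈ y) : x ≤ y := h.1

theorem Equiv.ge {x y : PGame.{u}} (h : x ≈ y) : y ≤ x := h.2

theorem Equiv.symm {x y : PGame.{u}} (h : x ≈ y) : y ≈ x := ⟨h.2, h.1⟩

theorem Equiv.trans {x y z : PGame.{u}} (h₁ : x ≈ y) (h₂ : y ≈ z) : x ≈ z :=
  ⟨h₁.1.trans h₂.1, h₂.2.trans h₁.2⟩

theorem lf_of_le_of_lf {x y z : PGame.{u}} (h₁ : x ≤ y) (h₂ : y ⧏ z) : x ⧏ z :=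
  fun h => h₂ (h.trans h₁)

theorem lf_of_lf_of_le {x y z : PGame.{u}} (h₁ : x ⧏ y) (h₂ : y ≤ z) : x ⧏ z :=
  fun h => h₁ (h₂.trans h)

theorem moveLeft_lf {x : PGame.{u}} (i : x.LeftMoves) : x.moveLeft i ⧏ x :=
  (le_iff_forall_lf.1 le_rfl).1 i

theorem lf_moveRight {x : PGame.{u}} (j : x.RightMoves) : x ⧏ x.moveRight j :=
  (le_iff_forall_lf.1 le_rfl).2 j

theorem le_of_forall_exists {x y : PGame.{u}}
    (hl : ∀ i, ∃ i', x.moveLeft i ≤ y.moveLeft i')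
    (hr : ∀ j', ∃ j, x.moveRight j ≤ y.moveRight j') : x ≤ y :=
  le_iff_forall_lf.2
    ⟨fun i => let ⟨i', h⟩ := hl i; lf_of_le_of_lf h (moveLeft_lf i'),
     fun j' => let ⟨j, h⟩ := hr j'; lf_of_lf_of_le (lf_moveRight j) h⟩

theorem equiv_of_exists {x y : PGame.{u}}
    (hl₁ : ∀ i, ∃ i', x.moveLeft i ≈ y.moveLeft i')
    (hr₁ : ∀ j, ∃ j', x.moveRight j ≈ y.moveRight j')
    (hl₂ : ∀ i', ∃ i, x.moveLeft i ≈ y.moveLeft i')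
    (hr₂ : ∀ j', ∃ j, x.moveRight j ≈ y.moveRight j') : x ≈ y :=
  ⟨le_of_forall_exists (fun i => (hl₁ i).imp fun _ => Equiv.le)
      (fun j' => (hr₂ j').imp fun _ => Equiv.le),
    le_of_forall_exists (fun i' => (hl₂ i').imp fun _ => Equiv.ge)
      (fun j => (hr₁ j).imp fun _ => Equiv.ge)⟩

theorem neg_mk {xl xr : Type u} {xL : xl → PGame.{u}} {xR : xr → PGame.{u}} :
    -mk xl xr xL xR = mk xr xl (fun j => -xR j) fun i => -xL i := rfl

theorem neg_le_neg_iff_aux (x : PGame.{u}) : ∀ y : PGame.{u},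
    (-y ≤ -x ↔ x ≤ y) ∧ (-x ≤ -y ↔ y ≤ x) := by
  induction x with
  | mk xl xr xL xR ihL ihR =>
    intro y
    induction y with
    | mk yl yr yL yR jhL jhR =>
      have e₁ : -mk yl yr yL yR ≤ -mk xl xr xL xR ↔
          (∀ j, -yR j ⧏ -mk xl xr xL xR) ∧ (∀ i, -mk yl yr yL yR ⧏ -xL i) :=
        le_iff_forall_lf (x := mk yr yl (fun j => -yR j) (fun i => -yL i))
          (y := mk xr xl (fun j => -xR j) (fun i => -xL i))
      have e₂ : -mk xl xr xL xR ≤ -mk yl yr yL yR ↔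
          (∀ i, -xR i ⧏ -mk yl yr yL yR) ∧ (∀ j, -mk xl xr xL xR ⧏ -yL j) :=
        le_iff_forall_lf (x := mk xr xl (fun j => -xR j) (fun i => -xL i))
          (y := mk yr yl (fun j => -yR j) (fun i => -yL i))
      refine ⟨e₁.trans (Iff.trans ?_ le_iff_forall_lf.symm),
        e₂.trans (Iff.trans ?_ le_iff_forall_lf.symm)⟩
      · exact ⟨fun ⟨a, b⟩ => ⟨fun i h => b i ((ihL i _).2.2 h), fun j h => a j ((jhR j).2.2 h)⟩,
          fun ⟨a, b⟩ => ⟨fun j h => b j ((jhR j).2.1 h), fun i h => a i ((ihL i _).2.1 h)⟩⟩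
      · exact ⟨fun ⟨a, b⟩ => ⟨fun j h => b j ((jhL j).1.2 h), fun i h => a i ((ihR i _).1.2 h)⟩,
          fun ⟨a, b⟩ => ⟨fun i h => b i ((ihR i _).1.1 h), fun j h => a j ((jhL j).1.1 h)⟩⟩

theorem neg_le_neg_iff {x y : PGame.{u}} : -y ≤ -x ↔ x ≤ y := (neg_le_neg_iff_aux x y).1

theorem Equiv.neg {x y : PGame.{u}} (h : x ≈ y) : -x ≈ -y :=
  ⟨neg_le_neg_iff.2 h.2, neg_le_neg_iff.2 h.1⟩

theorem add_zero_equiv : ∀ x : PGame.{u}, x + 0 ≈ x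
  | mk xl xr xL xR => by
    refine ⟨le_iff_forall_lf.2 ⟨?_, fun j => ?_⟩, le_iff_forall_lf.2 ⟨fun i => ?_, ?_⟩⟩
    · rintro (i | ⟨⟨⟩⟩)
      exact lf_of_le_of_lf (add_zero_equiv (xL i)).1 (moveLeft_lf (x := mk xl xr xL xR) i)
    · exact lf_iff_exists_le.2 (.inr ⟨.inl j, (add_zero_equiv (xR j)).1⟩)
    · exact lf_iff_exists_le.2 (.inl ⟨.inl i, (add_zero_equiv (xL i)).2⟩)
    · rintro (j | ⟨⟨⟩⟩)
      exact lf_of_lf_of_le (lf_moveRight (x := mk xl xr xL xR) j) (add_zero_equiv (xR j)).2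

theorem add_le_add_right_aux (x : PGame.{u}) : ∀ y z : PGame.{u},
    (x ≤ y → x + z ≤ y + z) ∧ (x ⧏ y → x + z ⧏ y + z) := by
  induction x with
  | mk xl xr xL xR ihL ihR =>
    intro y
    induction y with
    | mk yl yr yL yR jhL jhR =>
      intro z
      induction z with
      | mk zl zr zL zR khL khR =>
        refine ⟨fun h => le_iff_forall_lf.2 ⟨?_, ?_⟩, fun h => ?_⟩
        · rintro (i | k)
          · exact (ihL i (mk yl yr yL yR) (mk zl zr zL zR)).2 ((le_iff_forall_lf.1 h).1 i)
          · exact lf_of_le_of_lf ((khL k).1 h)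
              (moveLeft_lf (x := mk yl yr yL yR + mk zl zr zL zR) (Sum.inr k))
        · rintro (j | k)
          · exact (jhR j (mk zl zr zL zR)).2 ((le_iff_forall_lf.1 h).2 j)
          · exact lf_of_lf_of_le (lf_moveRight (x := mk xl xr xL xR + mk zl zr zL zR) (Sum.inr k))
              ((khR k).1 h)
        · rcases lf_iff_exists_le.1 h with ⟨i, hi⟩ | ⟨j, hj⟩
          · exact lf_of_le_of_lf ((jhL i (mk zl zr zL zR)).1 hi)
              (moveLeft_lf (x := mk yl yr yL yR + mk zl zr zL zR) (Sum.inl i))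
          · exact lf_of_lf_of_le (lf_moveRight (x := mk xl xr xL xR + mk zl zr zL zR) (Sum.inl j))
              ((ihR j (mk yl yr yL yR) (mk zl zr zL zR)).1 hj)

theorem Equiv.add_right {x y : PGame.{u}} (h : x ≈ y) (z : PGame.{u}) : x + z ≈ y + z :=
  ⟨(add_le_add_right_aux x y z).1 h.1, (add_le_add_right_aux y x z).1 h.2⟩

theorem forall_leftMoves_add {x y : PGame.{u}} {P : PGame.{u} → Prop} :
    (∀ k, P ((x + y).moveLeft k)) ↔ (∀ i, P (x.moveLeft i + y)) ∧ ∀ j, P (x + y.moveLeft j) := by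
  cases x; cases y; exact Sum.forall

theorem exists_leftMoves_add {x y : PGame.{u}} {P : PGame.{u} → Prop} :
    (∃ k, P ((x + y).moveLeft k)) ↔ (∃ i, P (x.moveLeft i + y)) ∨ ∃ j, P (x + y.moveLeft j) := by
  cases x; cases y; exact Sum.exists

theorem forall_rightMoves_add {x y : PGame.{u}} {P : PGame.{u} → Prop} :
    (∀ k, P ((x + y).moveRight k)) ↔ (∀ i, P (x.moveRight i + y)) ∧ ∀ j, P (x + y.moveRight j) := by
  cases x; cases y; exact Sum.forall

theorem exists_rightMoves_add {x y : PGame.{u}} {P : PGame.{u} → Prop} :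
    (∃ k, P ((x + y).moveRight k)) ↔ (∃ i, P (x.moveRight i + y)) ∨ ∃ j, P (x + y.moveRight j) := by
  cases x; cases y; exact Sum.exists

end SetTheory.PGame

open SetTheory PGame

-- `intPGame n` is a sum of `|n|` copies of `±1`; the canonical form below has at most one option,
-- so comparisons with it reduce to the simplicity rule (`le_canonInt`, `canonInt_le`).
def canonInt (n : ℤ) : PGame :=
  if n = 0 then 0
  else if 0 < n then PGame.mk PUnit PEmpty (fun _ => canonInt (n - 1)) PEmpty.elim
  else PGame.mk PEmpty PUnit PEmpty.elim (fun _ => canonInt (n + 1))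
termination_by n.natAbs
decreasing_by all_goals omega

theorem canonInt_zero : canonInt 0 = 0 := by
  rw [canonInt]; simp

theorem canonInt_of_pos {n : ℤ} (h : 0 < n) :
    canonInt n = PGame.mk PUnit PEmpty (fun _ => canonInt (n - 1)) PEmpty.elim := by
  rw [canonInt]; simp [h, h.ne']

theorem canonInt_of_neg {n : ℤ} (h : n < 0) :
    canonInt n = PGame.mk PEmpty PUnit PEmpty.elim (fun _ => canonInt (n + 1)) := by
  rw [canonInt]; simp [h.ne, not_lt.2 h.le]

theorem pos_of_leftMoves_canonInt {n : ℤ} (i : (canonInt n).LeftMoves) : 0 < n := by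
  rcases lt_trichotomy n 0 with h | rfl | h
  · rw [canonInt_of_neg h] at i; exact i.elim
  · rw [canonInt_zero] at i; exact i.elim
  · exact h

theorem neg_of_rightMoves_canonInt {n : ℤ} (j : (canonInt n).RightMoves) : n < 0 := by
  rcases lt_trichotomy n 0 with h | rfl | h
  · exact h
  · rw [canonInt_zero] at j; exact j.elim
  · rw [canonInt_of_pos h] at j; exact j.elim

theorem canonInt_moveLeft {n : ℤ} (i : (canonInt n).LeftMoves) :
    (canonInt n).moveLeft i = canonInt (n - 1) := by
  have h := pos_of_leftMoves_canonInt i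
  revert i; rw [canonInt_of_pos h]; exact fun _ => rfl

theorem canonInt_moveRight {n : ℤ} (j : (canonInt n).RightMoves) :
    (canonInt n).moveRight j = canonInt (n + 1) := by
  have h := neg_of_rightMoves_canonInt j
  revert j; rw [canonInt_of_neg h]; exact fun _ => rfl

theorem le_canonInt {x : PGame} {n : ℤ} (hl : ∀ i, x.moveLeft i ⧏ canonInt n)
    (hr : n < 0 → ∃ j, x.moveRight j ≤ canonInt (n + 1)) : x ≤ canonInt n := by
  refine le_iff_forall_lf.2 ⟨hl, fun j => ?_⟩
  have h := neg_of_rightMoves_canonInt j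
  obtain ⟨j', hj'⟩ := hr h
  exact lf_iff_exists_le.2 (.inr ⟨j', hj'.trans (canonInt_moveRight j).ge⟩)

theorem canonInt_le {x : PGame} {n : ℤ} (hr : ∀ j, canonInt n ⧏ x.moveRight j)
    (hl : 0 < n → ∃ i, canonInt (n - 1) ≤ x.moveLeft i) : canonInt n ≤ x := by
  refine le_iff_forall_lf.2 ⟨fun i => ?_, hr⟩
  have h := pos_of_leftMoves_canonInt i
  obtain ⟨i', hi'⟩ := hl h
  exact lf_iff_exists_le.2 (.inl ⟨i', (canonInt_moveLeft i).le.trans hi'⟩)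

theorem canonInt_lf_add_one (n : ℤ) : canonInt n ⧏ canonInt (n + 1) := by
  rcases lt_or_ge n 0 with h | h
  · rw [canonInt_of_neg h]
    exact lf_iff_exists_le.2 (.inr ⟨⟨⟩, le_rfl⟩)
  · rw [canonInt_of_pos (by omega : 0 < n + 1)]
    exact lf_iff_exists_le.2 (.inl ⟨⟨⟩, by rw [moveLeft_mk, add_sub_cancel_right]⟩)

theorem canonInt_le_add_one (n : ℤ) : canonInt n ≤ canonInt (n + 1) := by
  refine le_canonInt (fun i => ?_) (fun h => ?_)
  · have := pos_of_leftMoves_canonInt i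
    have ih := canonInt_le_add_one (n - 1)
    rw [sub_add_cancel] at ih
    rw [canonInt_moveLeft]
    exact lf_of_le_of_lf ih (canonInt_lf_add_one n)
  · rw [canonInt_of_neg (by omega : n < 0)]
    exact ⟨⟨⟩, canonInt_le_add_one (n + 1)⟩
termination_by n.natAbs
decreasing_by all_goals omega

theorem canonInt_mono : Monotone canonInt := monotone_int_of_le_succ canonInt_le_add_one

theorem canonInt_lf_of_lt {m n : ℤ} (h : m < n) : canonInt m ⧏ canonInt n :=
  lf_of_lf_of_le (canonInt_lf_add_one m) (canonInt_mono h)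

theorem canonInt_add_one_equiv (n : ℤ) : canonInt n + 1 ≈ canonInt (n + 1) := by
  constructor
  · refine le_canonInt ?_ fun h => ?_
    · refine forall_leftMoves_add (P := (· ⧏ canonInt (n + 1))).2 ⟨fun i => ?_, fun _ => ?_⟩
      · have := pos_of_leftMoves_canonInt i
        have ih := canonInt_add_one_equiv (n - 1)
        rw [sub_add_cancel] at ih
        rw [canonInt_moveLeft]
        exact lf_of_le_of_lf ih.le (canonInt_lf_add_one n)
      · exact lf_of_le_of_lf (add_zero_equiv _).le (canonInt_lf_add_one n)
    · rw [canonInt_of_neg (by omega : n < 0)]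
      exact exists_rightMoves_add (P := (· ≤ canonInt (n + 1 + 1))).2
        (.inl ⟨⟨⟩, (canonInt_add_one_equiv (n + 1)).le⟩)
  · refine canonInt_le ?_ fun _ => ?_
    · refine forall_rightMoves_add (P := (canonInt (n + 1) ⧏ ·)).2 ⟨fun j => ?_, fun j => j.elim⟩
      have := neg_of_rightMoves_canonInt j
      rw [canonInt_moveRight]
      exact lf_of_lf_of_le (canonInt_lf_add_one _) (canonInt_add_one_equiv (n + 1)).ge
    · rw [add_sub_cancel_right]
      exact exists_leftMoves_add (P := (canonInt n ≤ ·)).2 (.inr ⟨⟨⟩, (add_zero_equiv _).ge⟩)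
termination_by n.natAbs
decreasing_by all_goals omega

theorem natPGame_equiv_canonInt : ∀ k : ℕ, natPGame k ≈ canonInt k
  | 0 => by rw [natPGame, Nat.cast_zero, canonInt_zero]; exact .refl 0
  | k + 1 => by
    rw [natPGame, Nat.cast_succ]
    exact ((natPGame_equiv_canonInt k).add_right 1).trans (canonInt_add_one_equiv k)

theorem neg_canonInt (n : ℤ) : -canonInt n = canonInt (-n) := by
  rcases lt_trichotomy n 0 with h | rfl | h
  · rw [canonInt_of_neg h, canonInt_of_pos (n := -n) (by omega), neg_mk]
    congr 1
    · funext _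
      rw [neg_canonInt (n + 1), neg_add', sub_eq_add_neg]
    · funext j
      exact j.elim
  · rw [neg_zero, canonInt_zero]
    show mk _ _ _ _ = mk _ _ _ _
    congr 1 <;> funext j <;> exact j.elim
  · rw [canonInt_of_pos h, canonInt_of_neg (n := -n) (by omega), neg_mk]
    congr 1
    · funext j
      exact j.elim
    · funext _
      rw [neg_canonInt (n - 1), neg_sub, sub_eq_neg_add]
termination_by n.natAbs
decreasing_by all_goals omega

theorem intPGame_equiv_canonInt (n : ℤ) : intPGame n ≈ canonInt n := by
  unfold intPGame
  split_ifs with h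
  · simpa [Int.toNat_of_nonneg h] using natPGame_equiv_canonInt n.toNat
  · have := (natPGame_equiv_canonInt (-n).toNat).neg
    rwa [Int.toNat_of_nonneg (by omega), neg_canonInt, neg_neg] at this

namespace WT

theorem max?_eq_some_lmax {l : List ℤ} (h : l ≠ []) : l.max? = some (lmax l) := by
  cases l
  · exact absurd rfl h
  · rfl

theorem min?_eq_some_lmin {l : List ℤ} (h : l ≠ []) : l.min? = some (lmin l) := by
  cases l
  · exact absurd rfl h
  · rfl

theorem le_lmax {l : List ℤ} {x : ℤ} (hx : x ∈ l) : x ≤ lmax l :=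
  (List.max?_le_iff (max?_eq_some_lmax (List.ne_nil_of_mem hx))).1 le_rfl x hx

theorem lmin_le {l : List ℤ} {x : ℤ} (hx : x ∈ l) : lmin l ≤ x :=
  (List.le_min?_iff (min?_eq_some_lmin (List.ne_nil_of_mem hx))).1 le_rfl x hx

section Map

variable {α : Type*} {l : List α}

theorem le_lmax_map (f : α → ℤ) {x : α} (hx : x ∈ l) : f x ≤ lmax (l.map f) :=
  le_lmax (List.mem_map_of_mem hx)

theorem lmin_map_le (f : α → ℤ) {x : α} (hx : x ∈ l) : lmin (l.map f) ≤ f x :=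
  lmin_le (List.mem_map_of_mem hx)

theorem exists_eq_lmax_map (hl : l ≠ []) (f : α → ℤ) : ∃ x ∈ l, f x = lmax (l.map f) :=
  List.mem_map.1 (List.max?_mem (max?_eq_some_lmax (by simpa using hl)))

theorem exists_eq_lmin_map (hl : l ≠ []) (f : α → ℤ) : ∃ x ∈ l, f x = lmin (l.map f) :=
  List.mem_map.1 (List.min?_mem (min?_eq_some_lmin (by simpa using hl)))

theorem lmax_map_le_lmax_map_add {f g : α → ℤ} {c : ℤ} (hl : l ≠ [])
    (h : ∀ x ∈ l, f x ≤ g x + c) : lmax (l.map f) ≤ lmax (l.map g) + c := by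
  obtain ⟨x, hx, hfx⟩ := exists_eq_lmax_map hl f
  rw [← hfx]
  have := le_lmax_map g hx
  linarith [h x hx]

theorem lmin_map_le_lmin_map_add {f g : α → ℤ} {c : ℤ} (hl : l ≠ [])
    (h : ∀ x ∈ l, f x ≤ g x + c) : lmin (l.map f) ≤ lmin (l.map g) + c := by
  obtain ⟨x, hx, hgx⟩ := exists_eq_lmin_map hl g
  rw [← hgx]
  exact (lmin_map_le f hx).trans (h x hx)

end Map

theorem Lout_int (n : ℤ) : (int n).Lout = n := by
  rw [Lout, out]

theorem Rout_int (n : ℤ) : (int n).Rout = n := by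
  rw [Rout, out]

theorem Lout_node (L R : List WT) : (node L R).Lout = lmax (L.map Rout) := by
  rw [Lout, out]
  exact congrArg lmax (List.attach_map_val (l := L) (f := Rout))

theorem Rout_node (L R : List WT) : (node L R).Rout = lmin (R.map Lout) := by
  rw [Rout, out]
  exact congrArg lmin (List.attach_map_val (l := R) (f := Lout))

theorem IsWT.unique {G : WT} {p q : Bool} (hp : IsWT G p) (hq : IsWT G q) : p = q := by
  induction hp generalizing q with
  | int n => cases hq; rfl
  | node hL _ _ _ ihL =>
    cases hq with
    | node _ _ hLq =>
      obtain ⟨g, hg⟩ := List.exists_mem_of_ne_nil _ hL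
      rw [ihL g hg (hLq g hg)]

theorem IsWT.exists_int_subgame {G : WT} {p : Bool} (h : IsWT G p) :
    ∃ n, Subgame (WT.int n) G := by
  induction h with
  | int n => exact ⟨n, .refl _⟩
  | node hL _ _ _ ihL =>
    obtain ⟨g, hg⟩ := List.exists_mem_of_ne_nil _ hL
    obtain ⟨n, hn⟩ := ihL g hg
    exact ⟨n, .left hg hn⟩

theorem forall_subgame_int {P : WT → Prop} {n : ℤ} (h : P (int n)) :
    ∀ H, Subgame H (int n) → P H := by
  rintro H ⟨⟩
  exact h

theorem forall_subgame_node {P : WT → Prop} {L R : List WT} (hroot : P (node L R))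
    (hL : ∀ g ∈ L, ∀ H, Subgame H g → P H) (hR : ∀ g ∈ R, ∀ H, Subgame H g → P H) :
    ∀ H, Subgame H (node L R) → P H := by
  rintro H (_ | ⟨hg, hH⟩ | ⟨hg, hH⟩)
  exacts [hroot, hL _ hg H hH, hR _ hg H hH]

theorem gap_le {G : WT} {p : Bool} {c : ℤ}
    (h : ∀ H, Subgame H G → IsWT H p → H.Rout - H.Lout ≤ c) : G.gap p ≤ c :=
  csSup_le' <| by
    rintro _ ⟨H, hH, hp, rfl⟩
    exact WithBot.coe_le_coe.2 (h H hH hp)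

theorem gap_eq {G : WT} {p : Bool} {c : ℤ}
    (h : ∀ H, Subgame H G → IsWT H p → H.Rout - H.Lout ≤ c) {H₀ : WT} (hH₀ : Subgame H₀ G)
    (hp : IsWT H₀ p) (hc : H₀.Rout - H₀.Lout = c) : G.gap p = c := by
  refine le_antisymm (gap_le h) (le_csSup ⟨c, ?_⟩ ⟨H₀, hH₀, hp, by rw [hc]⟩)
  rintro _ ⟨H, hH, hp, rfl⟩
  exact WithBot.coe_le_coe.2 (h H hH hp)

end WT

namespace SPG

@[elab_as_elim]
theorem induction {motive : SPG → Prop}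
    (node : ∀ L R, (∀ g ∈ L, motive g) → (∀ g ∈ R, motive g) → motive (SPG.node L R)) :
    ∀ G, motive G
  | SPG.node L R =>
    node L R (fun g _ => induction node g) (fun g _ => induction node g)
termination_by G => sizeOf G
decreasing_by
  · exact sizeOf_lt_of_mem_lopts ‹_›
  · exact sizeOf_lt_of_mem_ropts ‹_›

theorem toPGame_node (L R : List SPG) :
    (SPG.node L R).toPGame =
      PGame.mk {g // g ∈ L} {g // g ∈ R} (fun g => g.1.toPGame) (fun g => g.1.toPGame) := by
  rw [toPGame]; rfl

abbrev IsInteger (G : SPG) : Prop := ∃ n : ℤ, PGame.Equiv G.toPGame (intPGame n)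

theorem isInteger_of_equiv_canonInt {G : SPG} {n : ℤ} (h : G.toPGame ≈ canonInt n) :
    G.IsInteger :=
  ⟨n, h.trans (intPGame_equiv_canonInt n).symm⟩

end SPG

theorem psi_int (n : ℤ) : psi (WT.int n) = intPGame n := by
  rw [psi]

theorem psi_node (L R : List WT) :
    psi (WT.node L R) =
      PGame.mk {g // g ∈ L} {g // g ∈ R} (fun g => psi g.1) (fun g => psi g.1) := by
  rw [psi]; rfl

theorem phi_of_isInteger {G : SPG} (h : G.IsInteger) :
    ∃ n : ℤ, G.toPGame ≈ canonInt n ∧ phi false G = WT.int n ∧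
      phi true G = WT.node [WT.int (n - 1)] [WT.int (n + 1)] :=
  ⟨h.choose, h.choose_spec.trans (intPGame_equiv_canonInt _), by rw [phi, dif_pos h]; rfl,
    by rw [phi, dif_pos h]; rfl⟩

theorem phi_node_of_not_isInteger {L R : List SPG} (h : ¬ (SPG.node L R).IsInteger) (i : Bool) :
    phi i (SPG.node L R) = WT.node (L.map (phi !i)) (R.map (phi !i)) := by
  rw [phi, dif_neg h]
  simp only [SPG.lopts, SPG.ropts, List.attach_map_val]

noncomputable def phiL (i : Bool) (G : SPG) : ℤ := (phi i G).Lout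

noncomputable def phiR (i : Bool) (G : SPG) : ℤ := (phi i G).Rout

theorem phiL_node {L R : List SPG} (hG : ¬ (SPG.node L R).IsInteger) (i : Bool) :
    phiL i (SPG.node L R) = WT.lmax (L.map (phiR !i)) := by
  rw [phiL, phi_node_of_not_isInteger hG, WT.Lout_node, List.map_map]; rfl

theorem phiR_node {L R : List SPG} (hG : ¬ (SPG.node L R).IsInteger) (i : Bool) :
    phiR i (SPG.node L R) = WT.lmin (R.map (phiL !i)) := by
  rw [phiR, phi_node_of_not_isInteger hG, WT.Rout_node, List.map_map]; rfl

theorem phiL_phiR_of_isInteger {G : SPG} (h : G.IsInteger) :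
    ∃ n : ℤ, G.toPGame ≈ canonInt n ∧ phiL false G = n ∧ phiR false G = n ∧
      phiL true G = n - 1 ∧ phiR true G = n + 1 := by
  obtain ⟨n, hn, h₀, h₁⟩ := phi_of_isInteger h
  refine ⟨n, hn, ?_, ?_, ?_, ?_⟩ <;>
    simp [phiL, phiR, h₀, h₁, WT.Lout_int, WT.Rout_int, WT.Lout_node, WT.Rout_node, WT.lmax,
      WT.lmin]

theorem SPG.toPGame_lf_toPGame_node {L R : List SPG} {g : SPG} (hg : g ∈ L) :
    g.toPGame ⧏ (SPG.node L R).toPGame := by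
  rw [SPG.toPGame_node]
  exact moveLeft_lf (x := PGame.mk {g // g ∈ L} {g // g ∈ R} _ _) ⟨g, hg⟩

theorem SPG.toPGame_node_lf_toPGame {L R : List SPG} {g : SPG} (hg : g ∈ R) :
    (SPG.node L R).toPGame ⧏ g.toPGame := by
  rw [SPG.toPGame_node]
  exact lf_moveRight (x := PGame.mk {g // g ∈ L} {g // g ∈ R} _ _) ⟨g, hg⟩

structure StopBounds (G : SPG) : Prop where
  phiL_true_le : phiL true G ≤ phiL false G
  phiL_false_le : phiL false G ≤ phiL true G + 1
  phiR_false_le : phiR false G ≤ phiR true G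
  phiR_true_le : phiR true G ≤ phiR false G + 1
  le_phiL : G.toPGame ≤ canonInt (phiL false G)
  phiR_le : canonInt (phiR false G) ≤ G.toPGame
  lf_phiR : G.toPGame ⧏ canonInt (phiR true G)
  phiL_lf : canonInt (phiL true G) ⧏ G.toPGame

theorem stopBounds_of_isInteger {G : SPG} (h : G.IsInteger) : StopBounds G := by
  obtain ⟨n, hn, eL₀, eR₀, eL₁, eR₁⟩ := phiL_phiR_of_isInteger h
  refine ⟨by omega, by omega, by omega, by omega, ?_, ?_, ?_, ?_⟩
  · rw [eL₀]; exact hn.le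
  · rw [eR₀]; exact hn.ge
  · rw [eR₁]; exact lf_of_le_of_lf hn.le (canonInt_lf_of_lt (by omega))
  · rw [eL₁]; exact lf_of_lf_of_le (canonInt_lf_of_lt (by omega)) hn.ge

section Node

variable {L R : List SPG}

theorem node_le_canonInt (hL : ∀ g ∈ L, StopBounds g) (hR : ∀ g ∈ R, StopBounds g) {n : ℤ}
    (hl : ∀ g ∈ L, phiR true g ≤ n) (hr : n < 0 → ∃ g ∈ R, phiL false g ≤ n + 1) :
    (SPG.node L R).toPGame ≤ canonInt n := by
  rw [SPG.toPGame_node]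
  refine le_canonInt (fun ⟨g, hg⟩ => ?_) (fun h => ?_)
  · exact lf_of_lf_of_le (hL g hg).lf_phiR (canonInt_mono (hl g hg))
  · obtain ⟨g, hg, hgn⟩ := hr h
    exact ⟨⟨g, hg⟩, (hR g hg).le_phiL.trans (canonInt_mono hgn)⟩

theorem canonInt_le_node (hL : ∀ g ∈ L, StopBounds g) (hR : ∀ g ∈ R, StopBounds g) {n : ℤ}
    (hr : ∀ g ∈ R, n ≤ phiL true g) (hl : 0 < n → ∃ g ∈ L, n - 1 ≤ phiR false g) :
    canonInt n ≤ (SPG.node L R).toPGame := by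
  rw [SPG.toPGame_node]
  refine canonInt_le (fun ⟨g, hg⟩ => ?_) (fun h => ?_)
  · exact lf_of_le_of_lf (canonInt_mono (hr g hg)) (hR g hg).phiL_lf
  · obtain ⟨g, hg, hgn⟩ := hl h
    exact ⟨⟨g, hg⟩, (canonInt_mono hgn).trans (hL g hg).phiR_le⟩

-- The simplicity rule, with the options' stops certifying `Gᴸ ⧏ n ⧏ Gᴿ`.
theorem isInteger_node (hL : ∀ g ∈ L, StopBounds g) (hR : ∀ g ∈ R, StopBounds g) (n : ℤ)
    (hl : ∀ g ∈ L, phiR true g ≤ n) (hr : ∀ g ∈ R, n ≤ phiL true g)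
    (hneg : n < 0 → ∃ g ∈ R, phiL false g ≤ n + 1) (hpos : 0 < n → ∃ g ∈ L, n - 1 ≤ phiR false g) :
    (SPG.node L R).IsInteger :=
  SPG.isInteger_of_equiv_canonInt
    ⟨node_le_canonInt hL hR hl hneg, canonInt_le_node hL hR hr hpos⟩

theorem lopts_ne_nil_of_not_isInteger (hL : ∀ g ∈ L, StopBounds g) (hR : ∀ g ∈ R, StopBounds g)
    (hG : ¬ (SPG.node L R).IsInteger) : L ≠ [] := by
  rintro rfl
  by_cases hRne : R = []
  · subst hRne
    exact hG (isInteger_node hL hR 0 (by simp) (by simp) (by omega) (by omega))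
  obtain ⟨g, hg, hgb⟩ := WT.exists_eq_lmin_map hRne (phiL true)
  refine hG (isInteger_node hL hR (min (WT.lmin (R.map (phiL true))) 0) (by simp)
    (fun g' hg' => ?_) (fun _ => ⟨g, hg, ?_⟩) (by omega))
  · have := WT.lmin_map_le (phiL true) hg'
    omega
  · have := (hR g hg).phiL_false_le
    omega

theorem ropts_ne_nil_of_not_isInteger (hL : ∀ g ∈ L, StopBounds g) (hR : ∀ g ∈ R, StopBounds g)
    (hG : ¬ (SPG.node L R).IsInteger) : R ≠ [] := by
  rintro rfl
  by_cases hLne : L = []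
  · subst hLne
    exact hG (isInteger_node hL hR 0 (by simp) (by simp) (by omega) (by omega))
  obtain ⟨g, hg, hga⟩ := WT.exists_eq_lmax_map hLne (phiR true)
  refine hG (isInteger_node hL hR (max (WT.lmax (L.map (phiR true))) 0) (fun g' hg' => ?_)
    (by simp) (by omega) (fun _ => ⟨g, hg, ?_⟩))
  · have := WT.le_lmax_map (phiR true) hg'
    omega
  · have := (hL g hg).phiR_true_le
    omega

theorem phiR_false_le_phiL_false (hL : ∀ g ∈ L, StopBounds g) (hR : ∀ g ∈ R, StopBounds g)
    (hG : ¬ (SPG.node L R).IsInteger) : phiR false (SPG.node L R) ≤ phiL false (SPG.node L R) := by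
  rw [phiR_node hG, phiL_node hG, Bool.not_false]
  by_contra! hab
  obtain ⟨gl, hgl, hal⟩ :=
    WT.exists_eq_lmax_map (lopts_ne_nil_of_not_isInteger hL hR hG) (phiR true)
  obtain ⟨gr, hgr, hbr⟩ :=
    WT.exists_eq_lmin_map (ropts_ne_nil_of_not_isInteger hL hR hG) (phiL true)
  set a := WT.lmax (L.map (phiR true))
  set b := WT.lmin (R.map (phiL true))
  refine hG (isInteger_node hL hR (max a (min b 0)) (fun g hg => ?_) (fun g hg => ?_)
    (fun _ => ⟨gr, hgr, ?_⟩) (fun _ => ⟨gl, hgl, ?_⟩))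
  · have := WT.le_lmax_map (phiR true) hg
    omega
  · have := WT.lmin_map_le (phiL true) hg
    omega
  · have := (hR gr hgr).phiL_false_le
    omega
  · have := (hL gl hgl).phiR_true_le
    omega

theorem phiR_true_le_phiL_true_add_two (hL : ∀ g ∈ L, StopBounds g)
    (hR : ∀ g ∈ R, StopBounds g) (hG : ¬ (SPG.node L R).IsInteger) :
    phiR true (SPG.node L R) ≤ phiL true (SPG.node L R) + 2 := by
  rw [phiR_node hG, phiL_node hG, Bool.not_true]
  by_contra! hab
  obtain ⟨gl, hgl, hal⟩ :=
    WT.exists_eq_lmax_map (lopts_ne_nil_of_not_isInteger hL hR hG) (phiR false)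
  obtain ⟨gr, hgr, hbr⟩ :=
    WT.exists_eq_lmin_map (ropts_ne_nil_of_not_isInteger hL hR hG) (phiL false)
  set a := WT.lmax (L.map (phiR false))
  set b := WT.lmin (R.map (phiL false))
  refine hG (isInteger_node hL hR (max (a + 1) (min (b - 1) 0)) (fun g hg => ?_) (fun g hg => ?_)
    (fun _ => ⟨gr, hgr, by omega⟩) (fun _ => ⟨gl, hgl, by omega⟩))
  · have := WT.le_lmax_map (phiR false) hg
    have := (hL g hg).phiR_true_le
    omega
  · have := WT.lmin_map_le (phiL false) hg
    have := (hR g hg).phiL_false_le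
    omega

theorem stopBounds_node_of_not_isInteger (hL : ∀ g ∈ L, StopBounds g)
    (hR : ∀ g ∈ R, StopBounds g) (hG : ¬ (SPG.node L R).IsInteger) : StopBounds (SPG.node L R) := by
  have hLne := lopts_ne_nil_of_not_isInteger hL hR hG
  have hRne := ropts_ne_nil_of_not_isInteger hL hR hG
  have hE := phiR_false_le_phiL_false hL hR hG
  rw [phiR_node hG, phiL_node hG, Bool.not_false] at hE
  obtain ⟨gl, hgl, hal⟩ := WT.exists_eq_lmax_map hLne (phiR false)
  obtain ⟨gr, hgr, hbr⟩ := WT.exists_eq_lmin_map hRne (phiL false)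
  obtain ⟨gr', hgr', hbr'⟩ := WT.exists_eq_lmin_map hRne (phiL true)
  obtain ⟨gl', hgl', hal'⟩ := WT.exists_eq_lmax_map hLne (phiR true)
  refine ⟨?_, ?_, ?_, ?_, ?_, ?_, ?_, ?_⟩ <;>
    simp only [phiL_node hG, phiR_node hG, Bool.not_false, Bool.not_true]
  · simpa using WT.lmax_map_le_lmax_map_add (c := 0) hLne fun g hg => by
      simpa using (hL g hg).phiR_false_le
  · exact WT.lmax_map_le_lmax_map_add hLne fun g hg => (hL g hg).phiR_true_le
  · simpa using WT.lmin_map_le_lmin_map_add (c := 0) hRne fun g hg => by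
      simpa using (hR g hg).phiL_true_le
  · exact WT.lmin_map_le_lmin_map_add hRne fun g hg => (hR g hg).phiL_false_le
  · refine node_le_canonInt hL hR (fun g hg => WT.le_lmax_map _ hg) fun _ => ⟨gr', hgr', ?_⟩
    have := (hR gr' hgr').phiL_false_le
    omega
  · refine canonInt_le_node hL hR (fun g hg => WT.lmin_map_le _ hg) fun _ => ⟨gl', hgl', ?_⟩
    have := (hL gl' hgl').phiR_true_le
    omega
  · rw [← hbr]
    exact lf_of_lf_of_le (SPG.toPGame_node_lf_toPGame hgr) (hR gr hgr).le_phiL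
  · rw [← hal]
    exact lf_of_le_of_lf (hL gl hgl).phiR_le (SPG.toPGame_lf_toPGame_node hgl)

end Node

theorem stopBounds (G : SPG) : StopBounds G := by
  induction G using SPG.induction with
  | node L R hL hR =>
    by_cases hG : (SPG.node L R).IsInteger
    · exact stopBounds_of_isInteger hG
    · exact stopBounds_node_of_not_isInteger hL hR hG

theorem isWT_phi (G : SPG) : ∀ i, WT.IsWT (phi i G) i := by
  induction G using SPG.induction with
  | node L R ihL ihR =>
    intro i
    by_cases hG : (SPG.node L R).IsInteger
    · obtain ⟨n, -, h₀, h₁⟩ := phi_of_isInteger hG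
      cases i
      · rw [h₀]
        exact .int n
      · rw [h₁]
        exact .node (p := false) (by simp) (by simp) (by simp [WT.IsWT.int]) (by simp [WT.IsWT.int])
    · have hL : ∀ g ∈ L, StopBounds g := fun g _ => stopBounds g
      have hR : ∀ g ∈ R, StopBounds g := fun g _ => stopBounds g
      have hLne := lopts_ne_nil_of_not_isInteger hL hR hG
      have hRne := ropts_ne_nil_of_not_isInteger hL hR hG
      rw [phi_node_of_not_isInteger hG, ← Bool.not_not i]
      refine .node (by simpa using hLne) (by simpa using hRne) ?_ ?_ <;>
        simp only [List.mem_map, Bool.not_not] <;> rintro _ ⟨g, hg, rfl⟩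
      exacts [ihL g hg !i, ihR g hg !i]

theorem psi_node_int_equiv_canonInt (n : ℤ) :
    psi (WT.node [WT.int (n - 1)] [WT.int (n + 1)]) ≈ canonInt n := by
  have hl : ∀ g ∈ [WT.int (n - 1)], psi g ≈ canonInt (n - 1) := by
    simp [psi_int, intPGame_equiv_canonInt]
  have hr : ∀ g ∈ [WT.int (n + 1)], psi g ≈ canonInt (n + 1) := by
    simp [psi_int, intPGame_equiv_canonInt]
  rw [psi_node]
  constructor
  · refine le_canonInt (fun ⟨g, hg⟩ => lf_of_le_of_lf (hl g hg).le (canonInt_lf_of_lt (by omega)))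
      fun _ => ⟨⟨_, List.mem_singleton_self _⟩, (hr _ (List.mem_singleton_self _)).le⟩
  · refine canonInt_le (fun ⟨g, hg⟩ => lf_of_lf_of_le (canonInt_lf_of_lt (by omega)) (hr g hg).ge)
      fun _ => ⟨⟨_, List.mem_singleton_self _⟩, (hl _ (List.mem_singleton_self _)).ge⟩

theorem psi_phi_equiv (G : SPG) : ∀ i, psi (phi i G) ≈ G.toPGame := by
  induction G using SPG.induction with
  | node L R ihL ihR =>
    intro i
    by_cases hG : (SPG.node L R).IsInteger
    · obtain ⟨n, hn, h₀, h₁⟩ := phi_of_isInteger hG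
      refine PGame.Equiv.trans ?_ hn.symm
      cases i
      · rw [h₀, psi_int]
        exact intPGame_equiv_canonInt n
      · rw [h₁]
        exact psi_node_int_equiv_canonInt n
    · rw [phi_node_of_not_isInteger hG, psi_node, SPG.toPGame_node]
      refine equiv_of_exists ?_ ?_ ?_ ?_
      · rintro ⟨_, hmem⟩
        obtain ⟨g, hg, rfl⟩ := List.mem_map.1 hmem
        exact ⟨⟨g, hg⟩, ihL g hg !i⟩
      · rintro ⟨_, hmem⟩
        obtain ⟨g, hg, rfl⟩ := List.mem_map.1 hmem
        exact ⟨⟨g, hg⟩, ihR g hg !i⟩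
      · rintro ⟨g, hg⟩
        exact ⟨⟨_, List.mem_map_of_mem hg⟩, ihL g hg !i⟩
      · rintro ⟨g, hg⟩
        exact ⟨⟨_, List.mem_map_of_mem hg⟩, ihR g hg !i⟩

def gapBound : Bool → ℤ
  | false => 0
  | true => 2

theorem phiR_sub_phiL_le (G : SPG) (i : Bool) : phiR i G - phiL i G ≤ gapBound i := by
  by_cases hG : G.IsInteger
  · obtain ⟨n, -, eL₀, eR₀, eL₁, eR₁⟩ := phiL_phiR_of_isInteger hG
    cases i
    · simp [eL₀, eR₀, gapBound]
    · simp only [eL₁, eR₁, gapBound]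
      omega
  · obtain ⟨L, R⟩ := G
    have hL : ∀ g ∈ L, StopBounds g := fun g _ => stopBounds g
    have hR : ∀ g ∈ R, StopBounds g := fun g _ => stopBounds g
    cases i
    · have := phiR_false_le_phiL_false hL hR hG
      simp only [gapBound]
      omega
    · have := phiR_true_le_phiL_true_add_two hL hR hG
      simp only [gapBound]
      omega

theorem rout_sub_lout_le_of_subgame_phi (G : SPG) (i : Bool) :
    ∀ H, WT.Subgame H (phi i G) → ∀ p, WT.IsWT H p → H.Rout - H.Lout ≤ gapBound p := by
  induction G using SPG.induction generalizing i with
  | node L R ihL ihR =>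
    have hroot : ∀ p, WT.IsWT (phi i (SPG.node L R)) p →
        (phi i (SPG.node L R)).Rout - (phi i (SPG.node L R)).Lout ≤ gapBound p := by
      intro p hp
      rw [← (isWT_phi _ i).unique hp]
      exact phiR_sub_phiL_le _ i
    have hint : ∀ n : ℤ, ∀ p, WT.IsWT (WT.int n) p →
        (WT.int n).Rout - (WT.int n).Lout ≤ gapBound p := by
      intro n p _
      rw [WT.Rout_int, WT.Lout_int, sub_self]
      cases p <;> decide
    by_cases hG : (SPG.node L R).IsInteger
    · obtain ⟨n, -, h₀, h₁⟩ := phi_of_isInteger hG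
      cases i
      · rw [h₀] at hroot ⊢
        exact WT.forall_subgame_int hroot
      · rw [h₁] at hroot ⊢
        refine WT.forall_subgame_node hroot ?_ ?_ <;> simp only [List.mem_singleton] <;>
          rintro _ rfl <;> exact WT.forall_subgame_int (hint _)
    · rw [phi_node_of_not_isInteger hG] at hroot ⊢
      refine WT.forall_subgame_node hroot ?_ ?_ <;> simp only [List.mem_map] <;>
        rintro _ ⟨g, hg, rfl⟩
      exacts [ihL g hg !i, ihR g hg !i]

/-- for any (short) partizan game G and i ∈ {0,1}, φᵢ(G) is a well-tempered
scoring game of parity i, lies in J (gap₀ = 0 and gap₁ ≤ 2), and ψ(φᵢ(G)) = G as partizan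
game values. -/
theorem phi_properties (G : SPG) (i : Bool) :
    WT.IsWT (phi i G) i ∧
    (phi i G).gap false = ((0 : ℤ) : WithBot ℤ) ∧
    (phi i G).gap true ≤ ((2 : ℤ) : WithBot ℤ) ∧
    PGame.Equiv (psi (phi i G)) G.toPGame := by
  have hgap (p : Bool) H (hH : WT.Subgame H (phi i G)) (hp : WT.IsWT H p) :
      H.Rout - H.Lout ≤ gapBound p :=
    rout_sub_lout_le_of_subgame_phi G i H hH p hp
  obtain ⟨n, hn⟩ := (isWT_phi G i).exists_int_subgame
  refine ⟨isWT_phi G i, WT.gap_eq (hgap false) hn (.int n) ?_, WT.gap_le (hgap true),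
    psi_phi_equiv G i⟩
  rw [WT.Rout_int, WT.Lout_int, sub_self]
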